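/- arXiv:2004.06375 — 3 statements merged into one kernel-verified Lean document; each statement's English description precedes it below -/
import Mathlib

section
/- The conflict-to-detection dual update monotonically increases the dual function: let c ∈ V_conf be a conflict node with c nonempty and let λ ∈ Λ. Let z* ∈ X_c be a minimizer of ⟨θ^λ_c, ·⟩ over X_c, let z** be a minimizer of ⟨θ^λ_c, ·⟩ over X_c \ {z*}, and set B_c = ½(⟨θ^λ_c, z*⟩ + ⟨θ^λ_c, z**⟩). Define the update μ ∈ Λ by μ((u,c)) = −θ^λ_c(u) + B_c for every u ∈ c, with all other components of μ equal to zero. Then D(λ) ≤ D(λ + μ). -/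
open Finset

/-- Transition edges: a move `u→v` is `Sum.inl (u, v)`, a division `u→(v, w)` is
`Sum.inr (u, v, w)`. -/
abbrev Edge (Vdet : Type*) := (Vdet × Vdet) ⊕ (Vdet × Vdet × Vdet)

/-- A detection state `(x_det, x_in, x_out)`: the activation flag is a `Bool`, and each
`{0,1}`-vector is identified with the finite set of coordinates equal to `1`. -/
abbrev DetS (Vdet : Type*) := Bool × Finset (Edge Vdet) × Finset (Edge Vdet)

/-- A tracking decomposition: detection nodes `Vdet`, conflict nodes `Vconf`,
move edges (with distinct endpoints), division edges (with pairwise distinct nodes)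
and conflict edges. -/
structure Tracking (Vdet Vconf : Type*) [Fintype Vdet] [DecidableEq Vdet]
    [Fintype Vconf] [DecidableEq Vconf] where
  Emove : Finset (Vdet × Vdet)
  Ediv : Finset (Vdet × Vdet × Vdet)
  Econf : Finset (Vdet × Vconf)
  move_ne : ∀ e ∈ Emove, e.1 ≠ e.2
  div_ne : ∀ e ∈ Ediv, e.1 ≠ e.2.1 ∧ e.1 ≠ e.2.2 ∧ e.2.1 ≠ e.2.2

/-- A cost vector `θ`. -/
structure Cost (Vdet Vconf : Type*) where
  det : Vdet → ℝ
  inn : Vdet → Edge Vdet → ℝ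
  out : Vdet → Edge Vdet → ℝ
  conf : Vconf → Vdet → ℝ

/-- A reparametrization `λ ∈ Λ`: one real per move edge, a pair of reals
`(λ_v(e), λ_w(e))` per division edge `e = u→(v,w)`, and one real per conflict edge. -/
abbrev Repa (Vdet Vconf : Type*) : Type _ :=
  ((Vdet × Vdet) → ℝ) × ((Vdet × Vdet × Vdet) → ℝ × ℝ) × ((Vdet × Vconf) → ℝ)

variable {Vdet Vconf : Type*} [Fintype Vdet] [DecidableEq Vdet]
  [Fintype Vconf] [DecidableEq Vconf]

namespace Tracking

variable (T : Tracking Vdet Vconf)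

/-- The set `In(u)` of incoming transition edges of a detection node `u`. -/
def In (u : Vdet) : Finset (Edge Vdet) :=
  (T.Emove.filter (fun m => m.2 = u)).image Sum.inl ∪
    (T.Ediv.filter (fun d => d.2.1 = u ∨ d.2.2 = u)).image Sum.inr

/-- The set `Out(u)` of outgoing transition edges of a detection node `u`. -/
def Out (u : Vdet) : Finset (Edge Vdet) :=
  (T.Emove.filter (fun m => m.1 = u)).image Sum.inl ∪
    (T.Ediv.filter (fun d => d.1 = u)).image Sum.inr

/-- The set `conf(u)` of conflict edges incident to a detection node `u`. -/
def confSet (u : Vdet) : Finset (Vdet × Vconf) := T.Econf.filter (fun e => e.1 = u)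

/-- The detection nodes `u ∈ c` of a conflict node `c`. -/
def membersOf (c : Vconf) : Finset Vdet := Finset.univ.filter (fun v => (v, c) ∈ T.Econf)

/-- The state space `X_u` of a detection node. -/
def XDet (u : Vdet) : Finset (DetS Vdet) :=
  Finset.univ.filter (fun s =>
    s.2.1 ⊆ T.In u ∧ s.2.2 ⊆ T.Out u ∧
    s.2.1.card ≤ (if s.1 then 1 else 0) ∧ s.2.2.card ≤ (if s.1 then 1 else 0))

lemma zero_mem_XDet (u : Vdet) : ((false, ∅, ∅) : DetS Vdet) ∈ T.XDet u := by
  simp [XDet]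

lemma XDet_nonempty (u : Vdet) : (T.XDet u).Nonempty := ⟨_, T.zero_mem_XDet u⟩

/-- The state space `X_c` of a conflict node. -/
def XConf (c : Vconf) : Finset (Finset Vdet) :=
  Finset.univ.filter (fun s => (∀ v ∈ s, (v, c) ∈ T.Econf) ∧ s.card ≤ 1)

lemma empty_mem_XConf (c : Vconf) : (∅ : Finset Vdet) ∈ T.XConf c := by
  simp [XConf]

lemma XConf_nonempty (c : Vconf) : (T.XConf c).Nonempty := ⟨_, T.empty_mem_XConf c⟩

end Tracking

/-- The cost `⟨θ_u, x_u⟩` of a detection state. -/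
def detCost (θ : Cost Vdet Vconf) (u : Vdet) (s : DetS Vdet) : ℝ :=
  (if s.1 then θ.det u else 0) + ∑ e ∈ s.2.1, θ.inn u e + ∑ e ∈ s.2.2, θ.out u e

/-- The cost `⟨θ_c, x_c⟩` of a conflict state. -/
def confCost (θ : Cost Vdet Vconf) (c : Vconf) (s : Finset Vdet) : ℝ :=
  ∑ v ∈ s, θ.conf c v

/-- The energy `E(θ, x)`. -/
def energy (θ : Cost Vdet Vconf) (x : Vdet → DetS Vdet) (y : Vconf → Finset Vdet) : ℝ :=
  ∑ u, detCost θ u (x u) + ∑ c, confCost θ c (y c)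

namespace Tracking

variable (T : Tracking Vdet Vconf)

/-- The coupling constraints relating the states of the nodes. -/
def Coupled (x : Vdet → DetS Vdet) (y : Vconf → Finset Vdet) : Prop :=
  (∀ m ∈ T.Emove, (Sum.inl m ∈ (x m.1).2.2 ↔ Sum.inl m ∈ (x m.2).2.1)) ∧
  (∀ d ∈ T.Ediv, (Sum.inr d ∈ (x d.1).2.2 ↔ Sum.inr d ∈ (x d.2.1).2.1) ∧
      (Sum.inr d ∈ (x d.1).2.2 ↔ Sum.inr d ∈ (x d.2.2).2.1)) ∧
  (∀ e ∈ T.Econf, ((x e.1).1 = true ↔ e.1 ∈ y e.2))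

/-- A feasible assignment `x ∈ X`: valid local states satisfying all coupling constraints. -/
def Feasible (x : Vdet → DetS Vdet) (y : Vconf → Finset Vdet) : Prop :=
  (∀ u, x u ∈ T.XDet u) ∧ (∀ c, y c ∈ T.XConf c) ∧ T.Coupled x y

/-- The reparametrized costs `θ^λ`. -/
def repaCost (θ : Cost Vdet Vconf) (l : Repa Vdet Vconf) : Cost Vdet Vconf where
  det u := θ.det u - ∑ e ∈ T.confSet u, l.2.2 e
  inn u e := θ.inn u e +
    (match e with
      | Sum.inl m => l.1 m
      | Sum.inr d =>
          (if d.2.1 = u then (l.2.1 d).1 else 0) + (if d.2.2 = u then (l.2.1 d).2 else 0))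
  out u e := θ.out u e -
    (match e with
      | Sum.inl m => l.1 m
      | Sum.inr d => (l.2.1 d).1 + (l.2.1 d).2)
  conf c u := θ.conf c u + l.2.2 (u, c)

/-- The dual function `D(λ)`. -/
def D (θ : Cost Vdet Vconf) (l : Repa Vdet Vconf) : ℝ :=
  ∑ u, (T.XDet u).inf' (T.XDet_nonempty u) (detCost (T.repaCost θ l) u) +
    ∑ c, (T.XConf c).inf' (T.XConf_nonempty c) (confCost (T.repaCost θ l) c)

/-- The states of `X_u` with active detection variable, `{x ∈ X_u : x_det = 1}`. -/
def XDet1 (u : Vdet) : Finset (DetS Vdet) := (T.XDet u).filter (fun s => s.1 = true)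

lemma one_mem_XDet1 (u : Vdet) : ((true, ∅, ∅) : DetS Vdet) ∈ T.XDet1 u := by
  simp [XDet1, XDet]

lemma XDet1_nonempty (u : Vdet) : (T.XDet1 u).Nonempty := ⟨_, T.one_mem_XDet1 u⟩

/-- The states of `X_u` with a given active outgoing edge, `{x ∈ X_u : x_out(e) = 1}`. -/
def XDetOut (u : Vdet) (e : Edge Vdet) : Finset (DetS Vdet) :=
  (T.XDet u).filter (fun s => e ∈ s.2.2)

lemma XDetOut_nonempty (u : Vdet) (e : Edge Vdet) (he : e ∈ T.Out u) :
    (T.XDetOut u e).Nonempty :=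
  ⟨(true, ∅, {e}), by simp [XDetOut, XDet, Finset.singleton_subset_iff, he]⟩

/-- The states of `X_u` with a given active incoming edge, `{x ∈ X_u : x_in(e) = 1}`. -/
def XDetIn (u : Vdet) (e : Edge Vdet) : Finset (DetS Vdet) :=
  (T.XDet u).filter (fun s => e ∈ s.2.1)

lemma XDetIn_nonempty (u : Vdet) (e : Edge Vdet) (he : e ∈ T.In u) :
    (T.XDetIn u e).Nonempty :=
  ⟨(true, {e}, ∅), by simp [XDetIn, XDet, Finset.singleton_subset_iff, he]⟩

/-- `min{⟨θ_u, x⟩ : x ∈ X_u, x_out(e) = 1}` (by convention `0` if `e ∉ Out(u)`). -/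
def minOutOn (θ : Cost Vdet Vconf) (u : Vdet) (e : Edge Vdet) : ℝ :=
  if h : e ∈ T.Out u then (T.XDetOut u e).inf' (T.XDetOut_nonempty u e h) (detCost θ u) else 0

/-- `min{⟨θ_u, x⟩ : x ∈ X_u, x_in(e) = 1}` (by convention `0` if `e ∉ In(u)`). -/
def minInOn (θ : Cost Vdet Vconf) (u : Vdet) (e : Edge Vdet) : ℝ :=
  if h : e ∈ T.In u then (T.XDetIn u e).inf' (T.XDetIn_nonempty u e h) (detCost θ u) else 0

end Tracking

/-- The conflict-to-detection dual update monotonically increases the dual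
function: with `z*` a best and `z**` a second-best state of the conflict node `c` under
`θ^λ`, `B_c = ½(⟨θ^λ_c, z*⟩ + ⟨θ^λ_c, z**⟩)`, and `μ((u,c)) = −θ^λ_c(u) + B_c` for `u ∈ c`
(all other components zero), we have `D(λ) ≤ D(λ + μ)`. -/
theorem conflict_update_monotone {Vdet Vconf : Type*} [Fintype Vdet] [DecidableEq Vdet]
    [Fintype Vconf] [DecidableEq Vconf] (T : Tracking Vdet Vconf) (θ : Cost Vdet Vconf)
    (l : Repa Vdet Vconf) (c : Vconf) (hc : ∃ u, (u, c) ∈ T.Econf)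
    (zs zss : Finset Vdet)
    (hzs : zs ∈ T.XConf c)
    (hzs_min : ∀ s ∈ T.XConf c,
      confCost (T.repaCost θ l) c zs ≤ confCost (T.repaCost θ l) c s)
    (hzss : zss ∈ T.XConf c) (hzss_ne : zss ≠ zs)
    (hzss_min : ∀ s ∈ T.XConf c, s ≠ zs →
      confCost (T.repaCost θ l) c zss ≤ confCost (T.repaCost θ l) c s)
    (B : ℝ)
    (hB : B = (confCost (T.repaCost θ l) c zs + confCost (T.repaCost θ l) c zss) / 2)
    (μ : Repa Vdet Vconf)
    (hμmove : μ.1 = 0) (hμdiv : μ.2.1 = 0)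
    (hμconf : ∀ e : Vdet × Vconf, μ.2.2 e =
      if e.2 = c ∧ e ∈ T.Econf then -(T.repaCost θ l).conf c e.1 + B else 0) :
    T.D θ l ≤ T.D θ (l + μ) := by
  classical
  set θl := T.repaCost θ l with hθl
  set θ' := T.repaCost θ (l + μ) with hθ'p
  set a := confCost θl c zs with ha
  set b := confCost θl c zss with hbdef
  have hab : a ≤ b := hzs_min zss hzss
  have ha0 : a ≤ 0 := by
    have := hzs_min ∅ (T.empty_mem_XConf c)
    simpa [confCost] using this
  have haB : a ≤ B := by rw [hB]; linarith
  have hBb : B ≤ b := by rw [hB]; linarith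
  have hlm1 : (l + μ).1 = l.1 := by rw [Prod.fst_add, hμmove, add_zero]
  have hlm21 : (l + μ).2.1 = l.2.1 := by
    rw [Prod.snd_add, Prod.fst_add, hμdiv, add_zero]
  set δ : Vdet → ℝ := fun u => if (u, c) ∈ T.Econf then θl.conf c u - B else 0 with hδ
  -- sum of μ over conf edges of u
  have hμsum : ∀ u : Vdet, ∑ e ∈ T.confSet u, μ.2.2 e = -δ u := by
    intro u
    rw [Finset.sum_eq_single (u, c)]
    · rw [hμconf]
      by_cases h : (u, c) ∈ T.Econf <;> simp [hδ, h] <;> ring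
    · rintro ⟨e1, e2⟩ he hne
      rw [hμconf]
      have he1 : e1 = u := (Finset.mem_filter.mp he).2
      have he2 : e2 ≠ c := by
        intro h2; exact hne (by rw [he1, h2])
      simp [he2]
    · intro h
      rw [hμconf]
      have hE : (u, c) ∉ T.Econf := by
        intro hm; exact h (by simp [Tracking.confSet, hm])
      simp [hE]
  have hdet : ∀ u, θ'.det u = θl.det u + δ u := by
    intro u
    have hsum : ∑ e ∈ T.confSet u, (l + μ).2.2 e
        = ∑ e ∈ T.confSet u, l.2.2 e + ∑ e ∈ T.confSet u, μ.2.2 e := by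
      simp only [Prod.snd_add, Pi.add_apply, Finset.sum_add_distrib]
    simp only [hθ'p, hθl, Tracking.repaCost, hsum, hμsum u]
    ring
  have hinn : ∀ u e, θ'.inn u e = θl.inn u e := by
    intro u e
    simp only [hθ'p, hθl, Tracking.repaCost, hlm1, hlm21]
  have hout : ∀ u e, θ'.out u e = θl.out u e := by
    intro u e
    simp only [hθ'p, hθl, Tracking.repaCost, hlm1, hlm21]
  have hdc : ∀ u s, detCost θ' u s = detCost θl u s + (if s.1 then δ u else 0) := by
    intro u s
    simp only [detCost, hdet, hinn, hout]
    cases hs : s.1 <;> simp [hs] <;> ring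
  -- detection node bound
  have hdetmin : ∀ u, (T.XDet u).inf' (T.XDet_nonempty u) (detCost θl u) + min 0 (δ u)
      ≤ (T.XDet u).inf' (T.XDet_nonempty u) (detCost θ' u) := by
    intro u
    apply Finset.le_inf'
    intro s hs
    rw [hdc u s]
    have h1 : (T.XDet u).inf' (T.XDet_nonempty u) (detCost θl u) ≤ detCost θl u s :=
      Finset.inf'_le _ hs
    have h2 : min 0 (δ u) ≤ (if s.1 then δ u else 0) := by
      split_ifs
      · exact min_le_right _ _
      · exact min_le_left _ _
    linarith
  -- other conflict nodes are unchanged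
  have hconf_ne : ∀ c' ∈ Finset.univ.erase c,
      (T.XConf c').inf' (T.XConf_nonempty c') (confCost θ' c')
        = (T.XConf c').inf' (T.XConf_nonempty c') (confCost θl c') := by
    intro c' hc'
    have hne : c' ≠ c := (Finset.mem_erase.mp hc').1
    apply Finset.inf'_congr _ rfl
    intro s hs
    simp only [confCost]
    apply Finset.sum_congr rfl
    intro v hv
    have h0 : μ.2.2 (v, c') = 0 := by rw [hμconf]; simp [hne]
    simp only [hθ'p, hθl, Tracking.repaCost, Prod.snd_add, Pi.add_apply, h0, add_zero]
  -- the updated conflict node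
  have hconfc : min 0 B ≤ (T.XConf c).inf' (T.XConf_nonempty c) (confCost θ' c) := by
    apply Finset.le_inf'
    intro s hs
    obtain ⟨-, hmem, hcard⟩ := Finset.mem_filter.mp hs
    have hcost : confCost θ' c s = s.card * B := by
      simp only [confCost]
      rw [Finset.sum_congr rfl (fun v hv => ?_), Finset.sum_const, nsmul_eq_mul]
      have hvE : (v, c) ∈ T.Econf := hmem v hv
      have hμv : μ.2.2 (v, c) = -θl.conf c v + B := by rw [hμconf]; simp [hvE]
      have h1 : θ'.conf c v = θl.conf c v + μ.2.2 (v, c) := by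
        simp only [hθ'p, hθl, Tracking.repaCost, Prod.snd_add, Pi.add_apply]; ring
      rw [h1, hμv]; ring
    rw [hcost]
    rcases Nat.le_one_iff_eq_zero_or_eq_one.mp hcard with h | h <;> rw [h]
    · simpa using min_le_left (0 : ℝ) B
    · simpa using min_le_right (0 : ℝ) B
  have hinfa : (T.XConf c).inf' (T.XConf_nonempty c) (confCost θl c) = a := by
    exact le_antisymm (Finset.inf'_le _ hzs) (Finset.le_inf' _ _ hzs_min)
  -- the key combinatorial estimate
  have hkey : a ≤ (∑ u ∈ Finset.univ.filter (fun u => (u, c) ∈ T.Econf),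
      min 0 (θl.conf c u - B)) + min 0 B := by
    by_cases hex : ∃ u0, (u0, c) ∈ T.Econf ∧ θl.conf c u0 < B
    · obtain ⟨u0, hu0E, hu0B⟩ := hex
      have hsing : ∀ u, (u, c) ∈ T.Econf → θl.conf c u < B → ({u} : Finset Vdet) = zs := by
        intro u huE huB
        by_contra hne
        have hmem : ({u} : Finset Vdet) ∈ T.XConf c := by
          simp [Tracking.XConf, huE]
        have h1 := hzss_min {u} hmem hne
        have hcc : confCost θl c ({u} : Finset Vdet) = θl.conf c u := by simp [confCost]
        rw [hcc] at h1
        linarith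
      have hz : zs = {u0} := (hsing u0 hu0E hu0B).symm
      have haval : a = θl.conf c u0 := by rw [ha, hz]; simp [confCost]
      have hb0 : b ≤ 0 := by
        have hne : (∅ : Finset Vdet) ≠ zs := by rw [hz]; exact (Finset.singleton_ne_empty u0).symm
        have h1 := hzss_min ∅ (T.empty_mem_XConf c) hne
        simpa [confCost] using h1
      have hB0 : B ≤ 0 := le_trans hBb hb0
      have hsum : ∑ u ∈ Finset.univ.filter (fun u => (u, c) ∈ T.Econf),
          min 0 (θl.conf c u - B) = θl.conf c u0 - B := by
        rw [Finset.sum_eq_single u0]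
        · rw [min_eq_right (by linarith)]
        · intro u hu hne
          have huE : (u, c) ∈ T.Econf := (Finset.mem_filter.mp hu).2
          have hge : ¬ θl.conf c u < B := by
            intro hlt
            have h2 : ({u} : Finset Vdet) = {u0} := (hsing u huE hlt).trans hz
            exact hne (Finset.singleton_inj.mp h2)
          rw [min_eq_left (by linarith)]
        · intro h
          exact absurd (Finset.mem_filter.mpr ⟨Finset.mem_univ u0, hu0E⟩) h
      rw [hsum, min_eq_right hB0, haval]
      ring_nf
      linarith
    · push_neg at hex
      have hsum0 : ∑ u ∈ Finset.univ.filter (fun u => (u, c) ∈ T.Econf),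
          min 0 (θl.conf c u - B) = 0 := by
        apply Finset.sum_eq_zero
        intro u hu
        have huE := (Finset.mem_filter.mp hu).2
        have hge := hex u huE
        rw [min_eq_left (by linarith)]
      rw [hsum0, zero_add]
      exact le_min ha0 haB
  have hsumδ : ∑ u : Vdet, min 0 (δ u)
      = ∑ u ∈ Finset.univ.filter (fun u => (u, c) ∈ T.Econf),
          min 0 (θl.conf c u - B) := by
    rw [Finset.sum_filter]
    apply Finset.sum_congr rfl
    intro u _
    simp only [hδ]
    split_ifs <;> simp
  -- assemble
  simp only [Tracking.D, ← hθl, ← hθ'p]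
  have hdetsum : ∑ u, (T.XDet u).inf' (T.XDet_nonempty u) (detCost θl u)
      + ∑ u : Vdet, min 0 (δ u)
      ≤ ∑ u, (T.XDet u).inf' (T.XDet_nonempty u) (detCost θ' u) := by
    rw [← Finset.sum_add_distrib]
    exact Finset.sum_le_sum (fun u _ => hdetmin u)
  have hsplit' : ∑ c', (T.XConf c').inf' (T.XConf_nonempty c') (confCost θ' c')
      = (∑ c' ∈ Finset.univ.erase c,
          (T.XConf c').inf' (T.XConf_nonempty c') (confCost θl c'))
        + (T.XConf c).inf' (T.XConf_nonempty c) (confCost θ' c) := by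
    rw [← Finset.sum_erase_add _ _ (Finset.mem_univ c)]
    rw [Finset.sum_congr rfl hconf_ne]
  have hsplitl : ∑ c', (T.XConf c').inf' (T.XConf_nonempty c') (confCost θl c')
      = (∑ c' ∈ Finset.univ.erase c,
          (T.XConf c').inf' (T.XConf_nonempty c') (confCost θl c')) + a := by
    rw [← Finset.sum_erase_add _ _ (Finset.mem_univ c), hinfa]
  rw [hsplit', hsplitl]
  have := hkey
  rw [← hsumδ] at this
  linarith
end

section
/- The forward (outgoing) transition dual update monotonically increases the dual function: let u ∈ V_det with In(u) and Out(u) nonempty and let λ ∈ Λ. Let x* be a minimizer of ⟨θ^λ_u, ·⟩ over {x ∈ X_u : x_det = 1}, let y* be a minimizer of ⟨θ^λ_u, ·⟩ over {x ∈ X_u : x_det = 1, x_in ≠ x*_in, x_out ≠ x*_out}, and set B_out = min{0, ½[⟨θ^λ_u, x*⟩ + ⟨θ^λ_u, (1, x*_in, y*_out)⟩]} (the state (1, x*_in, y*_out) lies in X_u). Define the update μ ∈ Λ by: μ(e) = min{⟨θ^λ_u, x⟩ : x ∈ X_u, x_out(e) = 1} − B_out for every move edge e ∈ Out(u); μ_v(e)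 = μ_w(e) = ½[ min{⟨θ^λ_u, x⟩ : x ∈ X_u, x_out(e) = 1} − B_out ] for every division edge e = u→(v,w) ∈ Out(u); all other components of μ are zero. Then D(λ) ≤ D(λ + μ). -/
/-!
The update moves `δ e = min{⟨θ^λ_u, x⟩ : x_out(e) = 1} - B_out` from the outgoing cost of each
`e ∈ Out(u)` to the incoming cost of its targets (half to each target of a division). A target
node has at most one active incoming edge, so its minimum drops by at most its share of
`min(0, δ e)`; summed over all targets this is `-∑ e, min(0, δ e)`, and it remains to show that
the minimum at `u` rises by that much. After the update every state of `u` with an active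
outgoing edge costs at least `B_out`, and the others keep their cost. Exchanging outgoing parts
between `x*` and `y*` shows that an edge `e` with `{e} ≠ x*_out` only occurs in states costing at
least `⟨θ^λ_u, (1, x*_in, y*_out)⟩ ≥ B_out`, so only the edge of `x*_out` can have `δ e < 0`;
in that case `B_out` is below the cost of every state without outgoing edge, and the gain at `u`
is at least `-min(0, δ e)`.
-/

open Finset

variable {Vdet Vconf : Type*} [Fintype Vdet] [DecidableEq Vdet]
  [Fintype Vconf] [DecidableEq Vconf]

lemma Finset.eq_empty_or_singleton_of_card_le_one {α : Type*} {s : Finset α} (h : s.card ≤ 1) :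
    s = ∅ ∨ ∃ a, s = {a} := by
  rcases s.eq_empty_or_nonempty with h0 | hs
  · exact Or.inl h0
  · exact Or.inr (card_eq_one.mp (le_antisymm h (one_le_card.mpr hs)))

namespace Tracking

variable (T : Tracking Vdet Vconf)

lemma mem_XDet_true {u : Vdet} {A O : Finset (Edge Vdet)} :
    ((true, A, O) : DetS Vdet) ∈ T.XDet u ↔
      A ⊆ T.In u ∧ O ⊆ T.Out u ∧ A.card ≤ 1 ∧ O.card ≤ 1 := by
  simp [XDet]

lemma mem_XDet_false {u : Vdet} {A O : Finset (Edge Vdet)} :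
    ((false, A, O) : DetS Vdet) ∈ T.XDet u ↔ A = ∅ ∧ O = ∅ := by
  simp +contextual [XDet, iff_def]

lemma mem_XDet1 {u : Vdet} {x : DetS Vdet} : x ∈ T.XDet1 u ↔ x ∈ T.XDet u ∧ x.1 = true :=
  mem_filter

lemma mem_XDet_true_of_mem {u : Vdet} {A O A' O' : Finset (Edge Vdet)}
    (h : ((true, A, O) : DetS Vdet) ∈ T.XDet u) (h' : ((true, A', O') : DetS Vdet) ∈ T.XDet u) :
    ((true, A, O') : DetS Vdet) ∈ T.XDet u := by
  rw [mem_XDet_true] at *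
  exact ⟨h.1, h'.2.1, h.2.2.1, h'.2.2.2⟩

lemma card_in_le_one {u : Vdet} {x : DetS Vdet} (hx : x ∈ T.XDet u) : x.2.1.card ≤ 1 := by
  obtain ⟨b, A, O⟩ := x
  cases b <;> simp_all [mem_XDet_true, mem_XDet_false]

lemma card_out_le_one {u : Vdet} {x : DetS Vdet} (hx : x ∈ T.XDet u) : x.2.2.card ≤ 1 := by
  obtain ⟨b, A, O⟩ := x
  cases b <;> simp_all [mem_XDet_true, mem_XDet_false]

lemma in_subset_In {u : Vdet} {x : DetS Vdet} (hx : x ∈ T.XDet u) : x.2.1 ⊆ T.In u :=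
  (mem_filter.1 hx).2.1

lemma out_subset_Out {u : Vdet} {x : DetS Vdet} (hx : x ∈ T.XDet u) : x.2.2 ⊆ T.Out u :=
  (mem_filter.1 hx).2.2.1

lemma eq_of_mem_XDetOut {u : Vdet} {e : Edge Vdet} {x : DetS Vdet} (hx : x ∈ T.XDetOut u e) :
    x = (true, x.2.1, {e}) := by
  obtain ⟨hxX, hex⟩ := mem_filter.1 hx
  obtain ⟨b, A, O⟩ := x
  cases b
  · obtain ⟨-, rfl⟩ := T.mem_XDet_false.1 hxX
    exact absurd hex (notMem_empty e)
  · have hO : O = {e} :=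
        eq_singleton_iff_unique_mem.2
        ⟨hex, fun a ha => card_le_one.1 (T.card_out_le_one hxX) a ha e hex⟩
    simp [hO]

@[simp] lemma inl_mem_In {u : Vdet} {m : Vdet × Vdet} :
    Sum.inl m ∈ T.In u ↔ m ∈ T.Emove ∧ m.2 = u := by
  simp [In, and_comm]

@[simp] lemma inr_mem_In {u : Vdet} {d : Vdet × Vdet × Vdet} :
    Sum.inr d ∈ T.In u ↔ d ∈ T.Ediv ∧ (d.2.1 = u ∨ d.2.2 = u) := by
  simp [In, and_comm]

@[simp] lemma inl_mem_Out {u : Vdet} {m : Vdet × Vdet} :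
    Sum.inl m ∈ T.Out u ↔ m ∈ T.Emove ∧ m.1 = u := by
  simp [Out, and_comm]

@[simp] lemma inr_mem_Out {u : Vdet} {d : Vdet × Vdet × Vdet} :
    Sum.inr d ∈ T.Out u ↔ d ∈ T.Ediv ∧ d.1 = u := by
  simp [Out, and_comm]

lemma notMem_Out_of_mem_In {u : Vdet} {e : Edge Vdet} (he : e ∈ T.In u) : e ∉ T.Out u := by
  cases e with
  | inl m =>
    rw [inl_mem_Out]
    rintro ⟨hm, hm1⟩
    exact T.move_ne m hm (hm1.trans (T.inl_mem_In.1 he).2.symm)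
  | inr d =>
    rw [inr_mem_Out]
    rintro ⟨hd, hd1⟩
    obtain ⟨h1, h2, -⟩ := T.div_ne d hd
    rcases (T.inr_mem_In.1 he).2 with h | h
    · exact h1 (hd1.trans h.symm)
    · exact h2 (hd1.trans h.symm)

lemma eq_of_mem_Out_of_mem_Out {a u : Vdet} {e : Edge Vdet} (ha : e ∈ T.Out a)
    (hu : e ∈ T.Out u) : a = u := by
  cases e <;> simp only [inl_mem_Out, inr_mem_Out] at ha hu <;> exact ha.2.symm.trans hu.2

lemma repaCost_add (θ : Cost Vdet Vconf) (l μ : Repa Vdet Vconf) :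
    T.repaCost θ (l + μ) = T.repaCost (T.repaCost θ l) μ := by
  simp only [repaCost, Prod.fst_add, Prod.snd_add, Pi.add_apply, sum_add_distrib, Cost.mk.injEq]
  refine ⟨funext fun a => ?_, funext₂ fun a e => ?_, funext₂ fun a e => ?_,
    funext₂ fun c a => ?_⟩
  · ring
  · cases e
    · ring
    · dsimp only
      split_ifs <;> ring
  · cases e <;> ring
  · ring

/-- The paper's update `μ` is `T.outUpdate u (fun e => T.minOutOn θ^λ u e - B_out)`. -/
noncomputable def outUpdate (u : Vdet) (δ : Edge Vdet → ℝ) : Repa Vdet Vconf :=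
  (fun m => if Sum.inl m ∈ T.Out u then δ (Sum.inl m) else 0,
   fun d => if Sum.inr d ∈ T.Out u then (δ (Sum.inr d) / 2, δ (Sum.inr d) / 2) else 0,
   0)

end Tracking

noncomputable def targetShare {V : Type*} [DecidableEq V] (a : V) : Edge V → ℝ
  | Sum.inl m => if m.2 = a then 1 else 0
  | Sum.inr d => (if d.2.1 = a then 1 / 2 else 0) + (if d.2.2 = a then 1 / 2 else 0)

lemma targetShare_nonneg {V : Type*} [DecidableEq V] (a : V) (e : Edge V) :
    0 ≤ targetShare a e := by
  cases e <;> simp only [targetShare] <;> split_ifs <;> norm_num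

lemma sum_targetShare {V : Type*} [Fintype V] [DecidableEq V] (e : Edge V) :
    ∑ a, targetShare a e = 1 := by
  cases e
  · simp only [targetShare, sum_ite_eq, mem_univ, if_true]
  · simp only [targetShare, sum_add_distrib, sum_ite_eq, mem_univ, if_true]
    norm_num

lemma Tracking.targetShare_eq_zero_of_mem_Out (T : Tracking Vdet Vconf) {u : Vdet}
    {e : Edge Vdet} (he : e ∈ T.Out u) : targetShare u e = 0 := by
  cases e with
  | inl m =>
    obtain ⟨hm, rfl⟩ := T.inl_mem_Out.1 he
    simp [targetShare, (T.move_ne m hm).symm]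
  | inr d =>
    obtain ⟨hd, rfl⟩ := T.inr_mem_Out.1 he
    obtain ⟨h1, h2, -⟩ := T.div_ne d hd
    simp [targetShare, h1.symm, h2.symm]

lemma detCost_add_detCost_swap_out {V C : Type*} (θ : Cost V C) (u : V)
    (A A' O O' : Finset (Edge V)) :
    detCost θ u (true, A, O) + detCost θ u (true, A', O') =
      detCost θ u (true, A, O') + detCost θ u (true, A', O) := by
  simp only [detCost, if_true]
  ring

namespace Tracking

variable (T : Tracking Vdet Vconf) {θ : Cost Vdet Vconf} {u : Vdet} {δ : Edge Vdet → ℝ}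

lemma eq_outUpdate {μ : Repa Vdet Vconf} (hconf : μ.2.2 = 0)
    (hmove : ∀ m, μ.1 m = if Sum.inl m ∈ T.Out u then δ (Sum.inl m) else 0)
    (hdiv : ∀ d, μ.2.1 d =
      if Sum.inr d ∈ T.Out u then (δ (Sum.inr d) / 2, δ (Sum.inr d) / 2) else 0) :
    μ = T.outUpdate u δ :=
  Prod.ext (funext hmove) (Prod.ext (funext hdiv) hconf)

lemma confCost_repaCost_outUpdate : confCost (T.repaCost θ (T.outUpdate u δ)) = confCost θ := by
  funext c s
  simp [confCost, repaCost, outUpdate]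

lemma inn_repaCost_outUpdate {a : Vdet} {e : Edge Vdet} (he : e ∈ T.In a) :
    (T.repaCost θ (T.outUpdate u δ)).inn a e =
      θ.inn a e + if e ∈ T.Out u then targetShare a e * δ e else 0 := by
  cases e with
  | inl m =>
    have hm : m.2 = a := (T.inl_mem_In.1 he).2
    simp only [repaCost, outUpdate, targetShare, hm]
    split_ifs <;> ring
  | inr d =>
    by_cases hd : Sum.inr d ∈ T.Out u
    · simp only [repaCost, outUpdate, targetShare, if_pos hd]
      split_ifs <;> ring
    · simp only [repaCost, outUpdate, if_neg hd, Prod.fst_zero, Prod.snd_zero, ite_self,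
        add_zero]

lemma out_repaCost_outUpdate (a : Vdet) (e : Edge Vdet) :
    (T.repaCost θ (T.outUpdate u δ)).out a e =
      θ.out a e - if e ∈ T.Out u then δ e else 0 := by
  cases e with
  | inl m => simp only [repaCost, outUpdate]
  | inr d =>
    simp only [repaCost, outUpdate]
    split_ifs <;> simp

lemma detCost_repaCost_outUpdate {a : Vdet} {x : DetS Vdet} (hx : x ∈ T.XDet a) :
    detCost (T.repaCost θ (T.outUpdate u δ)) a x = detCost θ a x
      + ∑ e ∈ x.2.1, (if e ∈ T.Out u then targetShare a e * δ e else 0)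
      - ∑ e ∈ x.2.2, (if e ∈ T.Out u then δ e else 0) := by
  have hdet : (T.repaCost θ (T.outUpdate u δ)).det a = θ.det a := by
    simp [repaCost, outUpdate]
  have hinn := sum_congr rfl fun e he =>
    T.inn_repaCost_outUpdate (θ := θ) (u := u) (δ := δ) (T.in_subset_In hx he)
  simp only [detCost, hdet, hinn, out_repaCost_outUpdate, sum_add_distrib, sum_sub_distrib]
  ring

def minDetCost (θ : Cost Vdet Vconf) (a : Vdet) : ℝ :=
  (T.XDet a).inf' (T.XDet_nonempty a) (detCost θ a)

lemma minDetCost_le {a : Vdet} {x : DetS Vdet} (hx : x ∈ T.XDet a) :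
    T.minDetCost θ a ≤ detCost θ a x :=
  inf'_le _ hx

lemma minDetCost_le_zero (a : Vdet) : T.minDetCost θ a ≤ 0 := by
  simpa [detCost] using T.minDetCost_le (θ := θ) (T.zero_mem_XDet a)

noncomputable def outLoss (u : Vdet) (δ : Edge Vdet → ℝ) (a : Vdet) : ℝ :=
  ∑ e ∈ T.Out u, targetShare a e * min 0 (δ e)

lemma outLoss_nonpos (a : Vdet) : T.outLoss u δ a ≤ 0 :=
  sum_nonpos fun e _ => mul_nonpos_of_nonneg_of_nonpos (targetShare_nonneg a e) (min_le_left _ _)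

lemma outLoss_le (a : Vdet) (e : Edge Vdet) :
    T.outLoss u δ a ≤ if e ∈ T.Out u then targetShare a e * δ e else 0 := by
  split_ifs with he
  · calc T.outLoss u δ a ≤ ∑ e' ∈ {e}, targetShare a e' * min 0 (δ e') :=
          sum_le_sum_of_subset_of_nonpos' (singleton_subset_iff.2 he) fun e' _ _ =>
            mul_nonpos_of_nonneg_of_nonpos (targetShare_nonneg a e') (min_le_left _ _)
      _ ≤ targetShare a e * δ e := by
          rw [sum_singleton]
          exact mul_le_mul_of_nonneg_left (min_le_right _ _) (targetShare_nonneg a e)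
  · exact T.outLoss_nonpos a

lemma outLoss_self : T.outLoss u δ u = 0 :=
  sum_eq_zero fun e he => by rw [T.targetShare_eq_zero_of_mem_Out he, zero_mul]

lemma sum_outLoss : ∑ a, T.outLoss u δ a = ∑ e ∈ T.Out u, min 0 (δ e) := by
  simp only [outLoss]
  rw [sum_comm]
  simp [← sum_mul, sum_targetShare]

lemma minDetCost_add_outLoss_le {a : Vdet} (hau : a ≠ u) :
    T.minDetCost θ a + T.outLoss u δ a ≤ T.minDetCost (T.repaCost θ (T.outUpdate u δ)) a := by
  refine le_inf' _ _ fun x hx => ?_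
  have hout : ∑ e ∈ x.2.2, (if e ∈ T.Out u then δ e else 0) = 0 :=
    sum_eq_zero fun e he =>
      if_neg fun heu => hau (T.eq_of_mem_Out_of_mem_Out (T.out_subset_Out hx he) heu)
  have hin : T.outLoss u δ a ≤
      ∑ e ∈ x.2.1, (if e ∈ T.Out u then targetShare a e * δ e else 0) := by
    rcases eq_empty_or_singleton_of_card_le_one (T.card_in_le_one hx) with h | ⟨e, h⟩
    · rw [h, sum_empty]
      exact T.outLoss_nonpos a
    · rw [h, sum_singleton]
      exact T.outLoss_le a e
  rw [T.detCost_repaCost_outUpdate hx, hout]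
  linarith [T.minDetCost_le (θ := θ) hx]

theorem D_le_D_add_outUpdate {l : Repa Vdet Vconf}
    (hu : T.minDetCost (T.repaCost θ l) u - ∑ e ∈ T.Out u, min 0 (δ e) ≤
      T.minDetCost (T.repaCost (T.repaCost θ l) (T.outUpdate u δ)) u) :
    T.D θ l ≤ T.D θ (l + T.outUpdate u δ) := by
  set θ' := T.repaCost θ l
  have hnode : ∀ a, T.minDetCost θ' a + (T.outLoss u δ a -
      if a = u then ∑ e ∈ T.Out u, min 0 (δ e) else 0) ≤
        T.minDetCost (T.repaCost θ' (T.outUpdate u δ)) a := by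
    intro a
    by_cases hau : a = u
    · subst hau
      rw [outLoss_self, if_pos rfl]
      linarith
    · rw [if_neg hau, sub_zero]
      exact T.minDetCost_add_outLoss_le hau
  have hsum := sum_le_sum fun a (_ : a ∈ univ) => hnode a
  rw [sum_add_distrib, sum_sub_distrib, sum_outLoss, sum_ite_eq', if_pos (mem_univ u), sub_self,
    add_zero] at hsum
  simp only [D, repaCost_add, confCost_repaCost_outUpdate]
  exact add_le_add_left hsum _

lemma minOutOn_le {e : Edge Vdet} {x : DetS Vdet} (hx : x ∈ T.XDetOut u e) :
    T.minOutOn θ u e ≤ detCost θ u x := by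
  obtain ⟨hxX, hex⟩ := mem_filter.1 hx
  rw [minOutOn, dif_pos (T.out_subset_Out hxX hex)]
  exact inf'_le _ hx

lemma le_minOutOn {e : Edge Vdet} {b : ℝ} (he : e ∈ T.Out u)
    (h : ∀ A, ((true, A, {e}) : DetS Vdet) ∈ T.XDet u → b ≤ detCost θ u (true, A, {e})) :
    b ≤ T.minOutOn θ u e := by
  rw [minOutOn, dif_pos he]
  refine le_inf' _ _ fun x hx => ?_
  have hxX := (mem_filter.1 hx).1
  rw [T.eq_of_mem_XDetOut hx] at hxX ⊢
  exact h _ hxX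

lemma le_minDetCost_outUpdate_minOutOn {B t : ℝ} (htB : t ≤ B)
    (ht : ∀ x ∈ T.XDet u, x.2.2 = ∅ → t ≤ detCost θ u x) :
    t ≤ T.minDetCost (T.repaCost θ (T.outUpdate u fun e => T.minOutOn θ u e - B)) u := by
  refine le_inf' _ _ fun x hx => ?_
  have hin : ∑ e ∈ x.2.1,
      (if e ∈ T.Out u then targetShare u e * (T.minOutOn θ u e - B) else 0) = 0 :=
    sum_eq_zero fun e he => if_neg (T.notMem_Out_of_mem_In (T.in_subset_In hx he))
  rw [T.detCost_repaCost_outUpdate hx, hin, add_zero]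
  rcases eq_empty_or_singleton_of_card_le_one (T.card_out_le_one hx) with h | ⟨e, h⟩
  · rw [h, sum_empty, sub_zero]
    exact ht x hx h
  · have hxe : x ∈ T.XDetOut u e := mem_filter.2 ⟨hx, h ▸ mem_singleton_self e⟩
    rw [h, sum_singleton, if_pos (T.out_subset_Out hx (h ▸ mem_singleton_self e))]
    linarith [T.minOutOn_le (θ := θ) hxe]

section Minimizers

variable {xA xO yA yO : Finset (Edge Vdet)}

lemma detCost_le_of_out_ne (hx : ((true, xA, xO) : DetS Vdet) ∈ T.XDet u)
    (hx_min : ∀ s ∈ T.XDet1 u, detCost θ u (true, xA, xO) ≤ detCost θ u s)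
    (hy : ((true, yA, yO) : DetS Vdet) ∈ T.XDet u) (hyA : yA ≠ xA)
    (hy_min : ∀ s ∈ T.XDet1 u, s.2.1 ≠ xA → s.2.2 ≠ xO →
      detCost θ u (true, yA, yO) ≤ detCost θ u s)
    {A O : Finset (Edge Vdet)} (hs : ((true, A, O) : DetS Vdet) ∈ T.XDet u) (hO : O ≠ xO) :
    detCost θ u (true, xA, yO) ≤ detCost θ u (true, A, O) := by
  have hA := hx_min (true, A, xO) (T.mem_XDet1.2 ⟨T.mem_XDet_true_of_mem hs hx, rfl⟩)
  have hO := hy_min (true, yA, O) (T.mem_XDet1.2 ⟨T.mem_XDet_true_of_mem hy hs, rfl⟩) hyA hO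
  linarith [detCost_add_detCost_swap_out θ u A yA O xO,
    detCost_add_detCost_swap_out θ u xA yA xO yO]

theorem minDetCost_sub_le_minDetCost_outUpdate {B : ℝ}
    (hx : ((true, xA, xO) : DetS Vdet) ∈ T.XDet u)
    (hx_min : ∀ s ∈ T.XDet1 u, detCost θ u (true, xA, xO) ≤ detCost θ u s)
    (hy : ((true, yA, yO) : DetS Vdet) ∈ T.XDet u) (hyA : yA ≠ xA)
    (hy_min : ∀ s ∈ T.XDet1 u, s.2.1 ≠ xA → s.2.2 ≠ xO →
      detCost θ u (true, yA, yO) ≤ detCost θ u s)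
    (hB : B = min 0 ((detCost θ u (true, xA, xO) + detCost θ u (true, xA, yO)) / 2)) :
    T.minDetCost θ u - ∑ e ∈ T.Out u, min 0 (T.minOutOn θ u e - B) ≤
      T.minDetCost (T.repaCost θ (T.outUpdate u fun e => T.minOutOn θ u e - B)) u := by
  obtain ⟨-, hxO, -, hxO_card⟩ := T.mem_XDet_true.1 hx
  have hM : ∀ A O, ((true, A, O) : DetS Vdet) ∈ T.XDet u → O ≠ xO →
      detCost θ u (true, xA, yO) ≤ detCost θ u (true, A, O) :=
    fun _ _ => T.detCost_le_of_out_ne hx hx_min hy hyA hy_min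
  have hFM := hx_min _ (T.mem_XDet1.2 ⟨T.mem_XDet_true_of_mem hx hy, rfl⟩)
  have hB0 : B ≤ 0 := hB ▸ min_le_left _ _
  have hBFM : B ≤ (detCost θ u (true, xA, xO) + detCost θ u (true, xA, yO)) / 2 :=
    hB ▸ min_le_right _ _
  have hold_B : T.minDetCost θ u ≤ B :=
    hB ▸ le_min (T.minDetCost_le_zero u) (by linarith [T.minDetCost_le (θ := θ) hx])
  have hloss : ∑ e ∈ T.Out u, min 0 (T.minOutOn θ u e - B) =
      ∑ e ∈ xO, min 0 (T.minOutOn θ u e - B) := by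
    refine (sum_subset hxO fun e he hexO => min_eq_left ?_).symm
    have := T.le_minOutOn he fun A hA =>
      hM A {e} hA (by rintro rfl; exact hexO (mem_singleton_self e))
    linarith
  rw [hloss]
  rcases eq_empty_or_singleton_of_card_le_one hxO_card with rfl | ⟨e, rfl⟩
  · rw [sum_empty, sub_zero]
    exact T.le_minDetCost_outUpdate_minOutOn hold_B fun z hz _ => T.minDetCost_le hz
  have hB_le : ∀ z ∈ T.XDet u, z.2.2 = ∅ → B ≤ detCost θ u z := by
    rintro ⟨_ | _, A, O⟩ hz (rfl : O = ∅)
    · obtain ⟨rfl, -⟩ := T.mem_XDet_false.1 hz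
      simpa [detCost] using hB0
    · linarith [hx_min _ (T.mem_XDet1.2 ⟨hz, rfl⟩), hM A ∅ hz (singleton_ne_empty e).symm]
  have hF := T.le_minOutOn (hxO (mem_singleton_self e)) fun A hA =>
    hx_min _ (T.mem_XDet1.2 ⟨hA, rfl⟩)
  rw [sum_singleton]
  have hold := T.minDetCost_le (θ := θ) hx
  refine T.le_minDetCost_outUpdate_minOutOn ?_ fun z hz hz0 => ?_ <;>
    rcases min_cases 0 (T.minOutOn θ u e - B) with ⟨h, -⟩ | ⟨h, -⟩ <;> rw [h]
  · linarith
  · linarith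
  · linarith [T.minDetCost_le (θ := θ) hz]
  · linarith [hB_le z hz hz0]

end Minimizers

end Tracking

theorem forward_transition_update_monotone_general {Vdet Vconf : Type*} [Fintype Vdet]
    [DecidableEq Vdet] [Fintype Vconf] [DecidableEq Vconf] (T : Tracking Vdet Vconf)
    (θ : Cost Vdet Vconf) (l : Repa Vdet Vconf) (u : Vdet)
    (xs ys : DetS Vdet)
    (hxs : xs ∈ T.XDet1 u)
    (hxs_min : ∀ s ∈ T.XDet1 u,
      detCost (T.repaCost θ l) u xs ≤ detCost (T.repaCost θ l) u s)
    (hys : ys ∈ T.XDet1 u) (hys_in : ys.2.1 ≠ xs.2.1)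
    (hys_min : ∀ s ∈ T.XDet1 u, s.2.1 ≠ xs.2.1 → s.2.2 ≠ xs.2.2 →
      detCost (T.repaCost θ l) u ys ≤ detCost (T.repaCost θ l) u s)
    (Bout : ℝ)
    (hBout : Bout = min 0 ((detCost (T.repaCost θ l) u xs
      + detCost (T.repaCost θ l) u (true, xs.2.1, ys.2.2)) / 2))
    (μ : Repa Vdet Vconf)
    (hμconf : μ.2.2 = 0)
    (hμmove : ∀ m : Vdet × Vdet, μ.1 m =
      if Sum.inl m ∈ T.Out u then
        T.minOutOn (T.repaCost θ l) u (Sum.inl m) - Bout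
      else 0)
    (hμdiv : ∀ d : Vdet × Vdet × Vdet, μ.2.1 d =
      if Sum.inr d ∈ T.Out u then
        ((T.minOutOn (T.repaCost θ l) u (Sum.inr d) - Bout) / 2,
         (T.minOutOn (T.repaCost θ l) u (Sum.inr d) - Bout) / 2)
      else 0) :
    ((true, xs.2.1, ys.2.2) : DetS Vdet) ∈ T.XDet u ∧ T.D θ l ≤ T.D θ (l + μ) := by
  obtain ⟨xb, xA, xO⟩ := xs
  obtain ⟨yb, yA, yO⟩ := ys
  obtain ⟨hx, rfl : xb = true⟩ := T.mem_XDet1.1 hxs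
  obtain ⟨hy, rfl : yb = true⟩ := T.mem_XDet1.1 hys
  obtain rfl := T.eq_outUpdate (δ := fun e => T.minOutOn (T.repaCost θ l) u e - Bout)
    hμconf hμmove hμdiv
  exact ⟨T.mem_XDet_true_of_mem hx hy, T.D_le_D_add_outUpdate
    (T.minDetCost_sub_le_minDetCost_outUpdate hx hxs_min hy hys_in hys_min hBout)⟩

/-- The forward (outgoing) transition dual update monotonically increases
the dual function: with `x*` a minimizer over `{x ∈ X_u : x_det = 1}`, `y*` a minimizer over
`{x ∈ X_u : x_det = 1, x_in ≠ x*_in, x_out ≠ x*_out}`,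
`B_out = min{0, ½[⟨θ^λ_u, x*⟩ + ⟨θ^λ_u, (1, x*_in, y*_out)⟩]}` (the state `(1, x*_in, y*_out)`
lies in `X_u`), and `μ` defined on the outgoing edges of `u` as stated (all other components
zero), we have `D(λ) ≤ D(λ + μ)`. -/
theorem forward_transition_update_monotone {Vdet Vconf : Type*} [Fintype Vdet]
    [DecidableEq Vdet] [Fintype Vconf] [DecidableEq Vconf] (T : Tracking Vdet Vconf)
    (θ : Cost Vdet Vconf) (l : Repa Vdet Vconf) (u : Vdet)
    (hIn : (T.In u).Nonempty) (hOut : (T.Out u).Nonempty)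
    (xs ys : DetS Vdet)
    (hxs : xs ∈ T.XDet1 u)
    (hxs_min : ∀ s ∈ T.XDet1 u,
      detCost (T.repaCost θ l) u xs ≤ detCost (T.repaCost θ l) u s)
    (hys : ys ∈ T.XDet1 u) (hys_in : ys.2.1 ≠ xs.2.1) (hys_out : ys.2.2 ≠ xs.2.2)
    (hys_min : ∀ s ∈ T.XDet1 u, s.2.1 ≠ xs.2.1 → s.2.2 ≠ xs.2.2 →
      detCost (T.repaCost θ l) u ys ≤ detCost (T.repaCost θ l) u s)
    (Bout : ℝ)
    (hBout : Bout = min 0 ((detCost (T.repaCost θ l) u xs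
      + detCost (T.repaCost θ l) u (true, xs.2.1, ys.2.2)) / 2))
    (μ : Repa Vdet Vconf)
    (hμconf : μ.2.2 = 0)
    (hμmove : ∀ m : Vdet × Vdet, μ.1 m =
      if Sum.inl m ∈ T.Out u then
        T.minOutOn (T.repaCost θ l) u (Sum.inl m) - Bout
      else 0)
    (hμdiv : ∀ d : Vdet × Vdet × Vdet, μ.2.1 d =
      if Sum.inr d ∈ T.Out u then
        ((T.minOutOn (T.repaCost θ l) u (Sum.inr d) - Bout) / 2,
         (T.minOutOn (T.repaCost θ l) u (Sum.inr d) - Bout) / 2)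
      else 0) :
    ((true, xs.2.1, ys.2.2) : DetS Vdet) ∈ T.XDet u ∧ T.D θ l ≤ T.D θ (l + μ) :=
  forward_transition_update_monotone_general T θ l u xs ys hxs hxs_min hys hys_in hys_min Bout hBout
    μ hμconf hμmove hμdiv
end

section
/- The Lagrange dual is exactly as tight as the natural LP relaxation: sup_{λ∈Λ} D(λ) = min E(θ, x), where the minimum on the right is taken over all relaxed assignments x in which x_u = (x_det, x_in, x_out) ∈ [0,1] × [0,1]^{In(u)} × [0,1]^{Out(u)} satisfies Σ_{e∈In(u)} x_in(e) ≤ x_det and Σ_{e∈Out(u)} x_out(e) ≤ x_det for every u ∈ V_det, x_c ∈ [0,1]^{c} satisfies Σ_{u∈c} x_c(u) ≤ 1 for every c ∈ V_conf, and all coupling constraints hold. -/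
open Finset

variable {Vdet Vconf : Type*} [Fintype Vdet] [DecidableEq Vdet]
  [Fintype Vconf] [DecidableEq Vconf]

/-!
Weak duality: a fractional local state is dominated by the better of the empty state and the
state that activates one cheapest incoming and one cheapest outgoing edge, so each local minimum
of `D(λ)` is at most the reparametrized relaxed cost of any point of the local polytope. Summing,
`D(λ) ≤ E(θ^λ, x) = E(θ, x) + ⟨λ, residual(x)⟩`, and the residual of the coupling constraints
vanishes on feasible `x`.

Strong duality is Lagrangian duality for linear equality constraints over a compact convex set:
separating the point `(0, p - ε)` from the image of the local polytope under
`x ↦ (residual(x), E(θ, x))` produces `λ` with `p - ε ≤ E(θ^λ, x)` on the whole local polytope.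
At the indicator vector of the integral minimisers of the reparametrized local problems the
right-hand side is `D(λ)`.
-/

lemma Finset.sum_fiberwise_apply {ι κ M : Type*} [AddCommMonoid M] [DecidableEq κ] [Fintype κ]
    (s : Finset ι) (g : ι → κ) (f : κ → ι → M) :
    ∑ j, ∑ i ∈ s with g i = j, f j i = ∑ i ∈ s, f (g i) i := by
  rw [← sum_fiberwise s g fun i => f (g i) i]
  exact sum_congr rfl fun j _ => sum_congr rfl fun i hi => by rw [(mem_filter.1 hi).2]

lemma Finset.exists_subset_card_le_one_sum_mul_le {α : Type*} (s : Finset α) (f x : α → ℝ)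
    {r : ℝ} (hx : ∀ e ∈ s, 0 ≤ x e) (hr : ∑ e ∈ s, x e ≤ r) :
    ∃ t ⊆ s, #t ≤ 1 ∧ (∑ e ∈ t, f e) * r ≤ ∑ e ∈ s, f e * x e := by
  by_cases hneg : ∃ e ∈ s, f e < 0
  · obtain ⟨e₀, he₀, hmin⟩ := s.exists_min_image f (hneg.imp fun e h => h.1)
    obtain ⟨e, he, hfe⟩ := hneg
    have hfe₀ : f e₀ ≤ 0 := (hmin e he).trans hfe.le
    refine ⟨{e₀}, singleton_subset_iff.2 he₀, by simp, ?_⟩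
    calc (∑ e ∈ {e₀}, f e) * r ≤ f e₀ * ∑ e ∈ s, x e := by
          rw [sum_singleton]; exact mul_le_mul_of_nonpos_left hr hfe₀
      _ ≤ ∑ e ∈ s, f e * x e := by
          rw [mul_sum]
          exact sum_le_sum fun e he => mul_le_mul_of_nonneg_right (hmin e he) (hx e he)
  · push Not at hneg
    refine ⟨∅, empty_subset s, by simp, ?_⟩
    simpa using sum_nonneg fun e he => mul_nonneg (hneg e he) (hx e he)

theorem exists_forall_sub_le_lagrangian {E Λ : Type*} [NormedAddCommGroup E] [NormedSpace ℝ E]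
    [FiniteDimensional ℝ E] [AddCommGroup Λ] [Module ℝ Λ] [FiniteDimensional ℝ Λ]
    {C : Set E} (hCc : IsCompact C) (hCv : Convex ℝ C) (B : Λ →ₗ[ℝ] E →ₗ[ℝ] ℝ) (c : E →ₗ[ℝ] ℝ)
    {x₀ : E} (hx₀ : x₀ ∈ C) (hBx₀ : ∀ l, B l x₀ = 0)
    {p : ℝ} (hp : ∀ x ∈ C, (∀ l, B l x = 0) → p ≤ c x) {ε : ℝ} (hε : 0 < ε) :
    ∃ l, ∀ x ∈ C, p - ε ≤ c x + B l x := by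
  -- a basis of `Λ` turns the constraints into a map to a normed space, where Hahn–Banach applies
  let b := Module.finBasis ℝ Λ
  let Φ : E →ₗ[ℝ] (Fin (Module.finrank ℝ Λ) → ℝ) × ℝ := (LinearMap.pi fun i => B (b i)).prod c
  have hpt : (0, p - ε) ∉ Φ '' C := by
    rintro ⟨x, hx, hΦx⟩
    have hBx : ∀ l, B l x = 0 := fun l => by
      have : B.flip x = 0 := b.ext fun i => congrFun (congrArg Prod.fst hΦx) i
      exact LinearMap.congr_fun this l
    have hcx : c x = p - ε := congrArg Prod.snd hΦx
    linarith [hp x hx hBx]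
  obtain ⟨f, u, hfpt, hfC⟩ := geometric_hahn_banach_point_closed (hCv.linear_image Φ)
    (hCc.image Φ.continuous_of_finiteDimensional).isClosed hpt
  set μ := f (0, 1)
  have hf : ∀ v t, f (v, t) = f (v, 0) + t * μ := fun v t => by
    rw [← smul_eq_mul, ← map_smul, ← map_add]; simp
  rw [hf, Prod.mk_zero_zero, map_zero, zero_add] at hfpt
  -- the feasible point `x₀` forces the separating functional to increase with the cost
  have hμ : 0 < μ := by
    have h₀ : u < f (0, c x₀) := hfC _ ⟨x₀, hx₀, by ext i <;> simp [Φ, hBx₀]⟩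
    rw [hf, Prod.mk_zero_zero, map_zero, zero_add] at h₀
    nlinarith [hp x₀ hx₀ hBx₀]
  set lam : Fin (Module.finrank ℝ Λ) → ℝ := fun i => f (fun j => if i = j then 1 else 0, 0)
  refine ⟨μ⁻¹ • ∑ i, lam i • b i, fun x hx => ?_⟩
  have hBl : B (μ⁻¹ • ∑ i, lam i • b i) x * μ = f ((Φ x).1, 0) := by
    have := LinearMap.pi_apply_eq_sum_univ (f.toLinearMap.comp (LinearMap.inl ℝ _ ℝ)) (Φ x).1
    simp only [LinearMap.coe_comp, ContinuousLinearMap.coe_coe, Function.comp_apply,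
      LinearMap.inl_apply, smul_eq_mul] at this
    rw [this, map_smul, LinearMap.smul_apply, smul_eq_mul, mul_comm, mul_inv_cancel_left₀ hμ.ne']
    simp [Φ, lam, mul_comm]
  have hux : u < f ((Φ x).1, 0) + c x * μ := hf _ (c x) ▸ hfC _ ⟨x, hx, rfl⟩
  nlinarith

/-- A relaxed assignment `(x_det, x_in, x_out, x_c)`. The entries `x_in u e` with `e ∉ In(u)`,
`x_out u e` with `e ∉ Out(u)` and `x_c c v` with `v ∉ c` are dummies. -/
abbrev FracAssignment (Vdet Vconf : Type*) : Type _ :=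
  (Vdet → ℝ) × (Vdet → Edge Vdet → ℝ) × (Vdet → Edge Vdet → ℝ) × (Vconf → Vdet → ℝ)

def ofStates {α β : Type*} [DecidableEq α] (s : α → DetS α) (t : β → Finset α) :
    FracAssignment α β :=
  (fun u => if (s u).1 then 1 else 0, fun u e => if e ∈ (s u).2.1 then 1 else 0,
    fun u e => if e ∈ (s u).2.2 then 1 else 0, fun c v => if v ∈ t c then 1 else 0)

lemma ofStates_mem_Icc {α β : Type*} [DecidableEq α] (s : α → DetS α) (t : β → Finset α) :
    ofStates s t ∈ Set.Icc 0 1 := by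
  constructor <;> refine ⟨fun u => ?_, fun u e => ?_, fun u e => ?_, fun c v => ?_⟩ <;>
    simp only [ofStates] <;> split_ifs <;> norm_num

namespace Tracking

variable (T : Tracking Vdet Vconf)

lemma mem_XDet {u : Vdet} {s : DetS Vdet} :
    s ∈ T.XDet u ↔ s.2.1 ⊆ T.In u ∧ s.2.2 ⊆ T.Out u ∧
      #s.2.1 ≤ (if s.1 then 1 else 0) ∧ #s.2.2 ≤ (if s.1 then 1 else 0) := by
  simp [XDet]

lemma mem_XConf {c : Vconf} {t : Finset Vdet} : t ∈ T.XConf c ↔ t ⊆ T.membersOf c ∧ #t ≤ 1 := by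
  simp [XConf, membersOf, subset_iff]

lemma sum_sum_In (g : Vdet → Edge Vdet → ℝ) :
    ∑ u, ∑ e ∈ T.In u, g u e =
      ∑ m ∈ T.Emove, g m.2 (.inl m) + ∑ d ∈ T.Ediv, (g d.2.1 (.inr d) + g d.2.2 (.inr d)) := by
  have hIn : ∀ u, ∑ e ∈ T.In u, g u e = ∑ m ∈ T.Emove with m.2 = u, g u (.inl m) +
      (∑ d ∈ T.Ediv with d.2.1 = u, g u (.inr d) + ∑ d ∈ T.Ediv with d.2.2 = u, g u (.inr d)) := by
    intro u
    rw [In, sum_union (by simp [disjoint_left]), sum_image (fun _ _ _ _ h => Sum.inl_injective h),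
      sum_image (fun _ _ _ _ h => Sum.inr_injective h), filter_or, sum_union]
    exact disjoint_filter.2 fun d hd h₁ h₂ => (T.div_ne d hd).2.2 (h₁.trans h₂.symm)
  simp only [hIn, sum_add_distrib, sum_fiberwise_apply]

lemma sum_sum_Out (g : Vdet → Edge Vdet → ℝ) :
    ∑ u, ∑ e ∈ T.Out u, g u e =
      ∑ m ∈ T.Emove, g m.1 (.inl m) + ∑ d ∈ T.Ediv, g d.1 (.inr d) := by
  have hOut : ∀ u, ∑ e ∈ T.Out u, g u e =
      ∑ m ∈ T.Emove with m.1 = u, g u (.inl m) + ∑ d ∈ T.Ediv with d.1 = u, g u (.inr d) := by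
    intro u
    rw [Out, sum_union (by simp [disjoint_left]), sum_image (fun _ _ _ _ h => Sum.inl_injective h),
      sum_image (fun _ _ _ _ h => Sum.inr_injective h)]
  simp only [hOut, sum_add_distrib, sum_fiberwise_apply]

lemma sum_sum_confSet (g : Vdet → Vdet × Vconf → ℝ) :
    ∑ u, ∑ e ∈ T.confSet u, g u e = ∑ e ∈ T.Econf, g e.1 e :=
  sum_fiberwise_apply _ _ _

lemma sum_sum_membersOf (g : Vconf → Vdet → ℝ) :
    ∑ c, ∑ v ∈ T.membersOf c, g c v = ∑ e ∈ T.Econf, g e.2 e.1 :=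
  (sum_finset_product_right (f := fun e => g e.2 e.1) _ _ _ fun e => by simp [membersOf]).symm

@[simps]
def relaxedEnergy (θ : Cost Vdet Vconf) : FracAssignment Vdet Vconf →ₗ[ℝ] ℝ where
  toFun x := ∑ u, (θ.det u * x.1 u + ∑ e ∈ T.In u, θ.inn u e * x.2.1 u e
      + ∑ e ∈ T.Out u, θ.out u e * x.2.2.1 u e)
    + ∑ c, ∑ v ∈ T.membersOf c, θ.conf c v * x.2.2.2 c v
  map_add' x y := by
    simp only [Prod.fst_add, Prod.snd_add, Pi.add_apply, mul_add, sum_add_distrib]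
    ring
  map_smul' a x := by
    simp only [Prod.smul_fst, Prod.smul_snd, Pi.smul_apply, smul_eq_mul, mul_add, mul_sum,
      RingHom.id_apply, mul_left_comm _ a]

def lagrangeTerm : Repa Vdet Vconf →ₗ[ℝ] FracAssignment Vdet Vconf →ₗ[ℝ] ℝ :=
  LinearMap.mk₂ ℝ (fun l x =>
    ∑ m ∈ T.Emove, l.1 m * (x.2.1 m.2 (.inl m) - x.2.2.1 m.1 (.inl m))
    + ∑ d ∈ T.Ediv, ((l.2.1 d).1 * (x.2.1 d.2.1 (.inr d) - x.2.2.1 d.1 (.inr d))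
        + (l.2.1 d).2 * (x.2.1 d.2.2 (.inr d) - x.2.2.1 d.1 (.inr d)))
    + ∑ e ∈ T.Econf, l.2.2 e * (x.2.2.2 e.2 e.1 - x.1 e.1))
    (fun l l' x => by
      simp only [Prod.fst_add, Prod.snd_add, Pi.add_apply, add_mul, sum_add_distrib]; ring)
    (fun a l x => by
      simp only [Prod.smul_fst, Prod.smul_snd, Pi.smul_apply, smul_eq_mul, mul_add, mul_sum,
        mul_assoc])
    (fun l x y => by
      simp only [Prod.fst_add, Prod.snd_add, Pi.add_apply, mul_add, mul_sub, sum_add_distrib,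
        sum_sub_distrib]; ring)
    (fun a l x => by
      simp only [Prod.smul_fst, Prod.smul_snd, Pi.smul_apply, smul_eq_mul, mul_add, mul_sum,
        ← mul_sub, mul_left_comm _ a])

lemma lagrangeTerm_apply (l : Repa Vdet Vconf) (x : FracAssignment Vdet Vconf) :
    T.lagrangeTerm l x =
      ∑ m ∈ T.Emove, l.1 m * (x.2.1 m.2 (.inl m) - x.2.2.1 m.1 (.inl m))
      + ∑ d ∈ T.Ediv, ((l.2.1 d).1 * (x.2.1 d.2.1 (.inr d) - x.2.2.1 d.1 (.inr d))
          + (l.2.1 d).2 * (x.2.1 d.2.2 (.inr d) - x.2.2.1 d.1 (.inr d)))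
      + ∑ e ∈ T.Econf, l.2.2 e * (x.2.2.2 e.2 e.1 - x.1 e.1) := rfl

lemma relaxedEnergy_repaCost (θ : Cost Vdet Vconf) (l : Repa Vdet Vconf)
    (x : FracAssignment Vdet Vconf) :
    T.relaxedEnergy (T.repaCost θ l) x = T.relaxedEnergy θ x + T.lagrangeTerm l x := by
  simp only [relaxedEnergy_apply, lagrangeTerm_apply, repaCost, add_mul, sub_mul, sum_add_distrib,
    sum_sub_distrib, sum_mul, sum_sum_In, sum_sum_Out, sum_sum_confSet, sum_sum_membersOf]
  -- the two targets of a division are distinct, so neither receives the other's multiplier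
  have h₁ : ∑ d ∈ T.Ediv, (if d.2.2 = d.2.1 then (l.2.1 d).2 else 0) * x.2.1 d.2.1 (.inr d) = 0 :=
    sum_eq_zero fun d hd => by simp [(T.div_ne d hd).2.2.symm]
  have h₂ : ∑ d ∈ T.Ediv, (if d.2.1 = d.2.2 then (l.2.1 d).1 else 0) * x.2.1 d.2.2 (.inr d) = 0 :=
    sum_eq_zero fun d hd => by simp [(T.div_ne d hd).2.2]
  simp only [h₁, h₂, if_true, mul_sub, sum_sub_distrib]
  ring

def FracCoupled (x : FracAssignment Vdet Vconf) : Prop :=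
  (∀ m ∈ T.Emove, x.2.2.1 m.1 (.inl m) = x.2.1 m.2 (.inl m)) ∧
  (∀ d ∈ T.Ediv, x.2.2.1 d.1 (.inr d) = x.2.1 d.2.1 (.inr d) ∧
    x.2.2.1 d.1 (.inr d) = x.2.1 d.2.2 (.inr d)) ∧
  (∀ e ∈ T.Econf, x.1 e.1 = x.2.2.2 e.2 e.1)

lemma forall_lagrangeTerm_eq_zero_iff (x : FracAssignment Vdet Vconf) :
    (∀ l, T.lagrangeTerm l x = 0) ↔ T.FracCoupled x := by
  constructor
  · intro h
    refine ⟨fun m hm => ?_, fun d hd => ⟨?_, ?_⟩, fun e he => ?_⟩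
    · have := h (Pi.single m 1, 0, 0)
      simp [lagrangeTerm_apply, Pi.single_apply, hm] at this
      linarith
    · have := h (0, Pi.single d (1, 0), 0)
      simp [lagrangeTerm_apply, Pi.single_apply, apply_ite Prod.fst, apply_ite Prod.snd, hd] at this
      linarith
    · have := h (0, Pi.single d (0, 1), 0)
      simp [lagrangeTerm_apply, Pi.single_apply, apply_ite Prod.fst, apply_ite Prod.snd, hd] at this
      linarith
    · have := h (0, 0, Pi.single e 1)
      simp [lagrangeTerm_apply, Pi.single_apply, he] at this
      linarith
  · rintro ⟨hmove, hdiv, hconf⟩ l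
    rw [lagrangeTerm_apply, sum_eq_zero fun m hm => by rw [hmove m hm, sub_self, mul_zero],
      sum_eq_zero fun d hd => by rw [← (hdiv d hd).1, ← (hdiv d hd).2]; ring,
      sum_eq_zero fun e he => by rw [hconf e he, sub_self, mul_zero]]
    ring

def localPolytope : Set (FracAssignment Vdet Vconf) :=
  {x | (∀ u, 0 ≤ x.1 u ∧ x.1 u ≤ 1) ∧
    (∀ u, ∀ e ∈ T.In u, 0 ≤ x.2.1 u e ∧ x.2.1 u e ≤ 1) ∧
    (∀ u, ∀ e ∈ T.Out u, 0 ≤ x.2.2.1 u e ∧ x.2.2.1 u e ≤ 1) ∧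
    (∀ u, ∑ e ∈ T.In u, x.2.1 u e ≤ x.1 u) ∧
    (∀ u, ∑ e ∈ T.Out u, x.2.2.1 u e ≤ x.1 u) ∧
    (∀ c, ∀ v ∈ T.membersOf c, 0 ≤ x.2.2.2 c v ∧ x.2.2.2 c v ≤ 1) ∧
    (∀ c, ∑ v ∈ T.membersOf c, x.2.2.2 c v ≤ 1)}

lemma isClosed_localPolytope : IsClosed T.localPolytope := by
  simp only [localPolytope, Set.ofPred_and, Set.ofPred_forall]
  repeat' first
    | apply IsClosed.inter
    | refine isClosed_iInter fun _ => ?_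
    | exact isClosed_le (by fun_prop) (by fun_prop)

lemma convex_localPolytope : Convex ℝ T.localPolytope := by
  rintro x ⟨hx₁, hx₂, hx₃, hx₄, hx₅, hx₆, hx₇⟩ y ⟨hy₁, hy₂, hy₃, hy₄, hy₅, hy₆, hy₇⟩ a b ha hb hab
  simp only [localPolytope, Set.mem_ofPred_eq, Prod.fst_add, Prod.snd_add, Prod.smul_fst,
    Prod.smul_snd, Pi.add_apply, Pi.smul_apply, smul_eq_mul, sum_add_distrib, ← mul_sum]
  have key : ∀ {p q r s : ℝ}, p ≤ q → r ≤ s → a * p + b * r ≤ a * q + b * s := fun h h' =>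
    add_le_add (mul_le_mul_of_nonneg_left h ha) (mul_le_mul_of_nonneg_left h' hb)
  refine ⟨fun u => ⟨?_, ?_⟩, fun u e he => ⟨?_, ?_⟩, fun u e he => ⟨?_, ?_⟩,
    fun u => key (hx₄ u) (hy₄ u), fun u => key (hx₅ u) (hy₅ u), fun c v hv => ⟨?_, ?_⟩,
    fun c => ?_⟩
  · simpa using key (hx₁ u).1 (hy₁ u).1
  · simpa [hab] using key (hx₁ u).2 (hy₁ u).2
  · simpa using key (hx₂ u e he).1 (hy₂ u e he).1
  · simpa [hab] using key (hx₂ u e he).2 (hy₂ u e he).2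
  · simpa using key (hx₃ u e he).1 (hy₃ u e he).1
  · simpa [hab] using key (hx₃ u e he).2 (hy₃ u e he).2
  · simpa using key (hx₆ c v hv).1 (hy₆ c v hv).1
  · simpa [hab] using key (hx₆ c v hv).2 (hy₆ c v hv).2
  · simpa [hab] using key (hx₇ c) (hy₇ c)

lemma inf'_detCost_le (η : Cost Vdet Vconf) (u : Vdet) {xd : ℝ} {xin xout : Edge Vdet → ℝ}
    (hxd : 0 ≤ xd ∧ xd ≤ 1) (hin : ∀ e ∈ T.In u, 0 ≤ xin e) (hout : ∀ e ∈ T.Out u, 0 ≤ xout e)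
    (hsin : ∑ e ∈ T.In u, xin e ≤ xd) (hsout : ∑ e ∈ T.Out u, xout e ≤ xd) :
    (T.XDet u).inf' (T.XDet_nonempty u) (detCost η u) ≤
      η.det u * xd + ∑ e ∈ T.In u, η.inn u e * xin e + ∑ e ∈ T.Out u, η.out u e * xout e := by
  obtain ⟨tin, htin, hcin, hin⟩ :=
    (T.In u).exists_subset_card_le_one_sum_mul_le (η.inn u) xin hin hsin
  obtain ⟨tout, htout, hcout, hout⟩ :=
    (T.Out u).exists_subset_card_le_one_sum_mul_le (η.out u) xout hout hsout
  have hoff : (T.XDet u).inf' (T.XDet_nonempty u) (detCost η u) ≤ 0 :=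
    (inf'_le _ (T.zero_mem_XDet u)).trans_eq (by simp [detCost])
  have hon : (T.XDet u).inf' (T.XDet_nonempty u) (detCost η u) ≤
      η.det u + ∑ e ∈ tin, η.inn u e + ∑ e ∈ tout, η.out u e :=
    (inf'_le _ <| T.mem_XDet (s := (true, tin, tout)) |>.2
      ⟨htin, htout, by simpa, by simpa⟩).trans_eq (by simp [detCost])
  -- the smaller of the two values is at most their convex combination with weight `xd`
  nlinarith

lemma inf'_confCost_le (η : Cost Vdet Vconf) (c : Vconf) {y : Vdet → ℝ}
    (hy : ∀ v ∈ T.membersOf c, 0 ≤ y v) (hsum : ∑ v ∈ T.membersOf c, y v ≤ 1) :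
    (T.XConf c).inf' (T.XConf_nonempty c) (confCost η c) ≤
      ∑ v ∈ T.membersOf c, η.conf c v * y v := by
  obtain ⟨t, ht, hct, hle⟩ :=
    (T.membersOf c).exists_subset_card_le_one_sum_mul_le (η.conf c) y hy hsum
  exact (inf'_le _ (T.mem_XConf.2 ⟨ht, hct⟩)).trans (by simpa [confCost] using hle)

lemma D_le_relaxedEnergy_repaCost (θ : Cost Vdet Vconf) (l : Repa Vdet Vconf)
    {x : FracAssignment Vdet Vconf} (hx : x ∈ T.localPolytope) :
    T.D θ l ≤ T.relaxedEnergy (T.repaCost θ l) x := by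
  obtain ⟨hd, hin, hout, hsin, hsout, hy, hsy⟩ := hx
  exact add_le_add
    (sum_le_sum fun u _ => T.inf'_detCost_le _ u (hd u) (fun e he => (hin u e he).1)
      (fun e he => (hout u e he).1) (hsin u) (hsout u))
    (sum_le_sum fun c _ => T.inf'_confCost_le _ c (fun v hv => (hy c v hv).1) (hsy c))

theorem D_le_relaxedEnergy (θ : Cost Vdet Vconf) (l : Repa Vdet Vconf)
    {x : FracAssignment Vdet Vconf} (hx : x ∈ T.localPolytope) (hcx : T.FracCoupled x) :
    T.D θ l ≤ T.relaxedEnergy θ x := by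
  have h := T.D_le_relaxedEnergy_repaCost θ l hx
  rwa [relaxedEnergy_repaCost, (T.forall_lagrangeTerm_eq_zero_iff x).2 hcx l, add_zero] at h

lemma ofStates_mem_localPolytope {s : Vdet → DetS Vdet} {t : Vconf → Finset Vdet}
    (hs : ∀ u, s u ∈ T.XDet u) (ht : ∀ c, t c ∈ T.XConf c) :
    ofStates s t ∈ T.localPolytope := by
  have hcast : ∀ {k : ℕ} (b : Bool), k ≤ (if b then 1 else 0) → (k : ℝ) ≤ if b then 1 else 0 := by
    rintro k (_ | _) h <;> simpa using h
  obtain ⟨h₀, h₁⟩ := ofStates_mem_Icc s t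
  refine ⟨fun u => ⟨h₀.1 u, h₁.1 u⟩, fun u e _ => ⟨h₀.2.1 u e, h₁.2.1 u e⟩,
    fun u e _ => ⟨h₀.2.2.1 u e, h₁.2.2.1 u e⟩, fun u => ?_, fun u => ?_,
    fun c v _ => ⟨h₀.2.2.2 c v, h₁.2.2.2 c v⟩, fun c => ?_⟩
  · obtain ⟨hsub, -, hcard, -⟩ := T.mem_XDet.1 (hs u)
    simpa [ofStates, sum_boole, filter_mem_eq_inter, inter_eq_right.2 hsub] using hcast _ hcard
  · obtain ⟨-, hsub, -, hcard⟩ := T.mem_XDet.1 (hs u)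
    simpa [ofStates, sum_boole, filter_mem_eq_inter, inter_eq_right.2 hsub] using hcast _ hcard
  · obtain ⟨hsub, hcard⟩ := T.mem_XConf.1 (ht c)
    simpa [ofStates, sum_boole, filter_mem_eq_inter, inter_eq_right.2 hsub] using hcard

lemma relaxedEnergy_ofStates (η : Cost Vdet Vconf) {s : Vdet → DetS Vdet}
    {t : Vconf → Finset Vdet} (hs : ∀ u, s u ∈ T.XDet u) (ht : ∀ c, t c ∈ T.XConf c) :
    T.relaxedEnergy η (ofStates s t) = energy η s t := by
  simp only [relaxedEnergy_apply, energy, ofStates, detCost, confCost, mul_ite, mul_one, mul_zero,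
    sum_ite_mem, inter_eq_right.2 (T.mem_XDet.1 (hs _)).1,
    inter_eq_right.2 (T.mem_XDet.1 (hs _)).2.1, inter_eq_right.2 (T.mem_XConf.1 (ht _)).1]

lemma exists_D_eq_energy (θ : Cost Vdet Vconf) (l : Repa Vdet Vconf) :
    ∃ s t, (∀ u, s u ∈ T.XDet u) ∧ (∀ c, t c ∈ T.XConf c) ∧
      T.D θ l = energy (T.repaCost θ l) s t := by
  choose s hs hsmin using fun u =>
    exists_mem_eq_inf' (T.XDet_nonempty u) (detCost (T.repaCost θ l) u)
  choose t ht htmin using fun c =>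
    exists_mem_eq_inf' (T.XConf_nonempty c) (confCost (T.repaCost θ l) c)
  exact ⟨s, t, hs, ht, by simp only [D, energy, hsmin, htmin]⟩

theorem iSup_D_eq_sInf_relaxedEnergy (θ : Cost Vdet Vconf) :
    ⨆ l, T.D θ l = sInf (T.relaxedEnergy θ '' {x | x ∈ T.localPolytope ∧ T.FracCoupled x}) := by
  set S := T.relaxedEnergy θ '' {x | x ∈ T.localPolytope ∧ T.FracCoupled x}
  have hzero : (0 : FracAssignment Vdet Vconf) ∈ T.localPolytope := by simp [localPolytope]
  have hweak : ∀ l, ∀ r ∈ S, T.D θ l ≤ r := by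
    rintro l _ ⟨x, ⟨hx, hcx⟩, rfl⟩
    exact T.D_le_relaxedEnergy θ l hx hcx
  have hS : S.Nonempty := ⟨_, Set.mem_image_of_mem _
    ⟨hzero, (T.forall_lagrangeTerm_eq_zero_iff 0).1 fun l => map_zero _⟩⟩
  have hdual : ∀ l, T.D θ l ≤ sInf S := fun l => le_csInf hS (hweak l)
  refine le_antisymm (ciSup_le hdual) (le_of_forall_pos_le_add fun ε hε => ?_)
  obtain ⟨l, hl⟩ := exists_forall_sub_le_lagrangian
    (isCompact_Icc.inter_left T.isClosed_localPolytope)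
    (T.convex_localPolytope.inter (convex_Icc 0 1)) T.lagrangeTerm (T.relaxedEnergy θ)
    ⟨hzero, by simp⟩ (fun l => map_zero _)
    (fun x hx hBx => csInf_le ⟨_, hweak 0⟩
      ⟨x, ⟨hx.1, (T.forall_lagrangeTerm_eq_zero_iff x).1 hBx⟩, rfl⟩) hε
  obtain ⟨s, t, hs, ht, hD⟩ := T.exists_D_eq_energy θ l
  have hst := hl (ofStates s t) ⟨T.ofStates_mem_localPolytope hs ht, ofStates_mem_Icc s t⟩
  rw [← relaxedEnergy_repaCost, relaxedEnergy_ofStates _ _ hs ht, ← hD] at hst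
  linarith [le_ciSup ⟨sInf S, Set.forall_mem_range.2 hdual⟩ l]

end Tracking

/-- The Lagrange dual is exactly as tight as the natural LP relaxation:
`sup_{λ∈Λ} D(λ)` equals the minimum of `E(θ, ·)` over all relaxed (fractional) assignments
satisfying the local constraints and all coupling constraints. -/
theorem dual_eq_lp_relaxation {Vdet Vconf : Type*} [Fintype Vdet] [DecidableEq Vdet]
    [Fintype Vconf] [DecidableEq Vconf] (T : Tracking Vdet Vconf) (θ : Cost Vdet Vconf) :
    (⨆ l : Repa Vdet Vconf, T.D θ l) =
      sInf { r : ℝ |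
        ∃ (xd : Vdet → ℝ) (xin xout : Vdet → Edge Vdet → ℝ) (yc : Vconf → Vdet → ℝ),
          (∀ u, 0 ≤ xd u ∧ xd u ≤ 1) ∧
          (∀ u, ∀ e ∈ T.In u, 0 ≤ xin u e ∧ xin u e ≤ 1) ∧
          (∀ u, ∀ e ∈ T.Out u, 0 ≤ xout u e ∧ xout u e ≤ 1) ∧
          (∀ u, ∑ e ∈ T.In u, xin u e ≤ xd u) ∧
          (∀ u, ∑ e ∈ T.Out u, xout u e ≤ xd u) ∧
          (∀ c, ∀ v ∈ T.membersOf c, 0 ≤ yc c v ∧ yc c v ≤ 1) ∧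
          (∀ c, ∑ v ∈ T.membersOf c, yc c v ≤ 1) ∧
          (∀ m ∈ T.Emove, xout m.1 (Sum.inl m) = xin m.2 (Sum.inl m)) ∧
          (∀ d ∈ T.Ediv, xout d.1 (Sum.inr d) = xin d.2.1 (Sum.inr d) ∧
            xout d.1 (Sum.inr d) = xin d.2.2 (Sum.inr d)) ∧
          (∀ e ∈ T.Econf, xd e.1 = yc e.2 e.1) ∧
          r = ∑ u, (θ.det u * xd u + ∑ e ∈ T.In u, θ.inn u e * xin u e
                + ∑ e ∈ T.Out u, θ.out u e * xout u e)
              + ∑ c, ∑ v ∈ T.membersOf c, θ.conf c v * yc c v } := by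
  rw [T.iSup_D_eq_sInf_relaxedEnergy θ]
  congr 1
  ext r
  constructor
  · rintro ⟨x, ⟨⟨h₁, h₂, h₃, h₄, h₅, h₆, h₇⟩, h₈, h₉, h₁₀⟩, rfl⟩
    exact ⟨x.1, x.2.1, x.2.2.1, x.2.2.2, h₁, h₂, h₃, h₄, h₅, h₆, h₇, h₈, h₉, h₁₀, rfl⟩
  · rintro ⟨xd, xin, xout, yc, h₁, h₂, h₃, h₄, h₅, h₆, h₇, h₈, h₉, h₁₀, rfl⟩
    exact ⟨(xd, xin, xout, yc), ⟨⟨h₁, h₂, h₃, h₄, h₅, h₆, h₇⟩, h₈, h₉, h₁₀⟩, rfl⟩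
end
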